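/- Suppose φⁿ : ZMod J → ℝ satisfies γ₋ ≤ φⁿⱼ ≤ γ₊ for all j, and φⁿ⁺¹ : ZMod J → ℝ satisfies (1+2λ)φⁿ⁺¹ⱼ = φⁿⱼ + λφⁿ⁺¹ⱼ₊₁ + λφⁿ⁺¹ⱼ₋₁ − Δt·f(φⁿⱼ) for all j, where λ > 0, f(γ₋) = 0, and Δt·f'(u) ≤ 1 for all u ∈ [γ₋,γ₊]. Then min_j φⁿ⁺¹ⱼ ≥ γ₋. -/

import Mathlib

/-!
The explicit part `u ↦ u - Δt f(u)` of the scheme has derivative `1 - Δt f' ≥ 0` on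
`[γ₋, γ₊]`, so it is monotone there and maps `[γ₋, γ₊]` above its value `γ₋` at `γ₋`.
At a minimum point of `φⁿ⁺¹` the neighbours only raise the right-hand side of the implicit
diffusion step, which forces the minimum to be at least the lower bound of the explicit part.
-/

theorem monotoneOn_sub_mul_of_mul_deriv_le_one {s : Set ℝ} (hs : Convex ℝ s) {δ : ℝ}
    {f f' : ℝ → ℝ} (hf : ∀ u ∈ s, HasDerivAt f (f' u) u) (hδ : ∀ u ∈ s, δ * f' u ≤ 1) :
    MonotoneOn (fun u => u - δ * f u) s := by
  have hderiv : ∀ u ∈ s, HasDerivAt (fun u => u - δ * f u) (1 - δ * f' u) u :=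
    fun u hu => (hasDerivAt_id u).sub ((hf u hu).const_mul δ)
  refine monotoneOn_of_hasDerivWithinAt_nonneg hs
    (fun u hu => (hderiv u hu).continuousAt.continuousWithinAt)
    (fun u hu => (hderiv u (interior_subset hu)).hasDerivWithinAt)
    (fun u hu => sub_nonneg.2 (hδ u (interior_subset hu)))

theorem le_of_implicit_diffusion_step {ι : Type*} [Finite ι] [Nonempty ι] {lam c : ℝ}
    (hlam : 0 ≤ lam) (l r : ι → ι) (ψ g : ι → ℝ) (hg : ∀ j, c ≤ g j)
    (hψ : ∀ j, (1 + 2 * lam) * ψ j = g j + lam * ψ (r j) + lam * ψ (l j)) (j : ι) :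
    c ≤ ψ j := by
  obtain ⟨j₀, hj₀⟩ := Finite.exists_min ψ
  have hr : lam * ψ j₀ ≤ lam * ψ (r j₀) := mul_le_mul_of_nonneg_left (hj₀ _) hlam
  have hl : lam * ψ j₀ ≤ lam * ψ (l j₀) := mul_le_mul_of_nonneg_left (hj₀ _) hlam
  have hmin : c ≤ ψ j₀ := by linarith [hψ j₀, hg j₀]
  exact hmin.trans (hj₀ j)

theorem semiImplicit_min_lower_general (J : ℕ) [NeZero J] (Δt lam γm γp : ℝ)
    (hlam : 0 < lam) (f f' : ℝ → ℝ)
    (hderiv : ∀ u ∈ Set.Icc γm γp, HasDerivAt f (f' u) u)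
    (hfm : f γm = 0)
    (hstep : ∀ u ∈ Set.Icc γm γp, Δt * f' u ≤ 1)
    (φn φn1 : ZMod J → ℝ)
    (hbound : ∀ j, γm ≤ φn j ∧ φn j ≤ γp)
    (hscheme : ∀ j, (1 + 2 * lam) * φn1 j =
      φn j + lam * φn1 (j + 1) + lam * φn1 (j - 1) - Δt * f (φn j)) :
    ∀ j, γm ≤ φn1 j := by
  have hmono := monotoneOn_sub_mul_of_mul_deriv_le_one (convex_Icc γm γp) hderiv hstep
  have hexplicit : ∀ j, γm ≤ φn j - Δt * f (φn j) := fun j => by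
    have hγ : γm ≤ γp := (hbound j).1.trans (hbound j).2
    simpa [hfm] using hmono (Set.left_mem_Icc.2 hγ) (hbound j) (hbound j).1
  exact le_of_implicit_diffusion_step hlam.le (· - 1) (· + 1) φn1 _ hexplicit
    fun j => by rw [hscheme j]; ring

/-- One-step lower bound (maximum principle, lower part) for the semi-implicit scheme. -/
theorem semiImplicit_min_lower (J : ℕ) [NeZero J] (Δt lam γm γp : ℝ)
    (hΔt : 0 < Δt) (hlam : 0 < lam) (hγ : γm < γp) (f f' : ℝ → ℝ)
    (hderiv : ∀ u ∈ Set.Icc γm γp, HasDerivAt f (f' u) u)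
    (hfm : f γm = 0)
    (hstep : ∀ u ∈ Set.Icc γm γp, Δt * f' u ≤ 1)
    (φn φn1 : ZMod J → ℝ)
    (hbound : ∀ j, γm ≤ φn j ∧ φn j ≤ γp)
    (hscheme : ∀ j, (1 + 2 * lam) * φn1 j =
      φn j + lam * φn1 (j + 1) + lam * φn1 (j - 1) - Δt * f (φn j)) :
    ∀ j, γm ≤ φn1 j :=
  semiImplicit_min_lower_general J Δt lam γm γp hlam f f' hderiv hfm hstep φn φn1 hbound hscheme
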